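/- Let U be a unitary on N qubits commuting with (e^{iθZ})^⊗N for all θ ∈ ℝ and such that U is Clifford. Then there exists a permutation σ ∈ S_N with U Zⱼ U† = Z_{σ(j)} for all j = 1, …, N. -/

import Mathlib

open Matrix MeasureTheory

/-- Basis index for `N` qubits. -/
abbrev QubitIdx (N : ℕ) := Fin N → Fin 2

/-- Linear operators on the Hilbert space `(ℂ²)^⊗N`, as matrices. -/
abbrev Op (N : ℕ) := Matrix (QubitIdx N) (QubitIdx N) ℂ

/-- The single-qubit Pauli matrices I, X, Y, Z. -/
noncomputable def σ1 : Fin 4 → Matrix (Fin 2) (Fin 2) ℂ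
  | 0 => 1
  | 1 => !![0, 1; 1, 0]
  | 2 => !![0, -Complex.I; Complex.I, 0]
  | 3 => !![1, 0; 0, -1]

/-- The unsigned Pauli operator on `N` qubits indexed by `a : Fin N → Fin 4`
(the Kronecker product of the single-qubit Paulis `σ1 (a k)`). -/
noncomputable def pauli {N : ℕ} (a : Fin N → Fin 4) : Op N :=
  Matrix.of fun i j => ∏ k, σ1 (a k) (i k) (j k)

/-- The phase factors `{±1, ±i}`. -/
def phases : Set ℂ := {1, -1, Complex.I, -Complex.I}

/-- The Pauli group on `N` qubits: phased unsigned Paulis. -/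
def PauliGroup (N : ℕ) : Set (Op N) :=
  {P | ∃ c ∈ phases, ∃ a : Fin N → Fin 4, P = c • pauli a}

/-- A Clifford operator: a unitary whose conjugation action preserves the Pauli group. -/
def IsClifford {N : ℕ} (U : Op N) : Prop :=
  U ∈ Matrix.unitaryGroup (QubitIdx N) ℂ ∧
    ∀ P ∈ PauliGroup N, U * P * Uᴴ ∈ PauliGroup N

/-- The `G`-symmetric unitary group `U_{N,G}`: unitaries commuting with every element of `G`. -/
def UnitarySym (N : ℕ) (G : Set (Op N)) : Set (Op N) :=
  {U | U ∈ Matrix.unitaryGroup (QubitIdx N) ℂ ∧ ∀ g ∈ G, U * g = g * U}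

/-- The `G`-symmetric Clifford group `C_{N,G}`. -/
def CliffordSym (N : ℕ) (G : Set (Op N)) : Set (Op N) :=
  {U | IsClifford U ∧ U ∈ UnitarySym N G}

/-- `G` is a subgroup of the unitary group on `N` qubits. -/
def IsUnitarySubgroup {N : ℕ} (G : Set (Op N)) : Prop :=
  (∀ g ∈ G, g ∈ Matrix.unitaryGroup (QubitIdx N) ℂ) ∧ (1 : Op N) ∈ G ∧
    (∀ g ∈ G, ∀ h ∈ G, g * h ∈ G) ∧ (∀ g ∈ G, gᴴ ∈ G)

/-- Operators on the `t`-fold tensor power `H^⊗t` of the `N`-qubit Hilbert space. -/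
abbrev BigOp (N t : ℕ) := Matrix (Fin t → QubitIdx N) (Fin t → QubitIdx N) ℂ

/-- The `t`-fold tensor (Kronecker) power `A^⊗t` of an operator `A`. -/
noncomputable def tpow {N : ℕ} (t : ℕ) (A : Op N) : BigOp N t :=
  Matrix.of fun i j => ∏ s, A (i s) (j s)

noncomputable instance OpMeasurableSpace {N : ℕ} : MeasurableSpace (Op N) := borel (Op N)

/-- The `t`-fold twirling channel `Φ_{t,μ}(L) = ∫ U^⊗t L (U^⊗t)† dμ(U)`, defined entrywise. -/
noncomputable def twirl {N : ℕ} (t : ℕ) (μ : Measure (Op N)) (L : BigOp N t) : BigOp N t :=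
  Matrix.of fun i j => ∫ U, (tpow t U * L * (tpow t U)ᴴ) i j ∂μ

/-- The Kronecker power `A^⊗N` of a single-qubit operator, as an operator on `N` qubits. -/
noncomputable def kronPow {N : ℕ} (A : Matrix (Fin 2) (Fin 2) ℂ) : Op N :=
  Matrix.of fun i j => ∏ k, A (i k) (j k)

/-- The single-qubit unitary `e^{iθZ}`. -/
noncomputable def expZ (θ : ℝ) : Matrix (Fin 2) (Fin 2) ℂ :=
  !![Complex.exp ((θ : ℂ) * Complex.I), 0; 0, Complex.exp (-(θ : ℂ) * Complex.I)]

/-- The permutation operator `V_σ` on the threefold tensor power `H^⊗3`. -/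
noncomputable def permOp {N : ℕ} (σ : Equiv.Perm (Fin 3)) : BigOp N 3 :=
  Matrix.of fun i j => if i = j ∘ ⇑σ⁻¹ then 1 else 0

/-- The tensor product `G₁ ⊗ G₂ ⊗ G₃` as an operator on `H^⊗3`. -/
noncomputable def tprod3 {N : ℕ} (G₁ G₂ G₃ : Op N) : BigOp N 3 :=
  Matrix.of fun i j => G₁ (i 0) (j 0) * G₂ (i 1) (j 1) * G₃ (i 2) (j 2)

/-! Conjugation by `U` sends `Z_j` to a phased Pauli `c_j P_{a_j}`. In the computational basis
`(e^{iθZ})^⊗N` is diagonal with entries `e^{iθ w(i)}`, where `w(i)` (`zWeight i`) is the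
eigenvalue of `∑ Z_k` on the basis state `i`; commuting with all of them forces `U` to be block
diagonal along the level sets of `w`, so `U` commutes with `∑ Z_k`, and then
`∑ c_j P_{a_j} = ∑ Z_k`.
Pairing with `Z_k` in the trace form, for which distinct Paulis are orthogonal, gives
`∑_{a_j = Z_k} c_j = 1`. Every phase other than `1` has nonpositive real part, so some `j` has
`a_j = Z_k` and `c_j = 1`; this assigns distinct `j`'s to distinct `k`'s, hence a permutation. -/

open Complex

theorem Complex.exists_exp_mul_I_ne {a b : ℝ} (h : a ≠ b) :
    ∃ θ : ℝ, exp (a * θ * I) ≠ exp (b * θ * I) := by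
  refine ⟨Real.pi / (a - b), fun heq => exp_ne_zero (b * (Real.pi / (a - b) : ℝ) * I) ?_⟩
  have hab : (a : ℂ) - b ≠ 0 := by exact_mod_cast sub_ne_zero.mpr h
  have hshift :
      exp (a * (Real.pi / (a - b) : ℝ) * I) = -exp (b * (Real.pi / (a - b) : ℝ) * I) := by
    rw [← mul_neg_one, ← exp_pi_mul_I, ← exp_add]
    congr 1
    push_cast
    field_simp
    ring
  rw [hshift] at heq
  linear_combination -heq / 2

namespace Matrix

variable {ι n R : Type*} [Fintype ι] [CommSemiring R]

def piKron (A : ι → Matrix n n R) : Matrix (ι → n) (ι → n) R :=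
  of fun i j => ∏ k, A k (i k) (j k)

theorem piKron_mul [DecidableEq ι] [Fintype n] (A B : ι → Matrix n n R) :
    piKron A * piKron B = piKron (A * B) := by
  ext i j
  simp only [piKron, mul_apply, of_apply, Pi.mul_apply, Fintype.prod_sum, Finset.prod_mul_distrib]

theorem trace_piKron [DecidableEq ι] [Fintype n] (A : ι → Matrix n n R) :
    trace (piKron A) = ∏ k, trace (A k) := by
  simp only [trace, piKron, diag_apply, of_apply, Fintype.prod_sum]

theorem piKron_diagonal [DecidableEq n] (d : ι → n → R) :
    piKron (fun k => diagonal (d k)) = diagonal fun i => ∏ k, d k (i k) := by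
  ext i j
  by_cases hij : i = j
  · subst hij
    simp [piKron]
  · obtain ⟨k, hk⟩ := Function.ne_iff.mp hij
    simp only [piKron, of_apply, diagonal_apply_ne _ hij]
    exact Finset.prod_eq_zero (Finset.mem_univ k) (diagonal_apply_ne _ hk)

theorem commute_diagonal_of_forall_commute_diagonal_exp [DecidableEq ι] {U : Matrix ι ι ℂ}
    (f : ι → ℝ)
    (h : ∀ θ : ℝ, Commute U (diagonal fun i => exp (f i * θ * I))) :
    Commute U (diagonal fun i => (f i : ℂ)) := by
  ext i j
  rw [mul_diagonal, diagonal_mul]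
  by_cases hij : f i = f j
  · rw [hij, mul_comm]
  · obtain ⟨θ, hθ⟩ := Complex.exists_exp_mul_I_ne (Ne.symm hij)
    have hθij := congrFun (congrFun (h θ).eq i) j
    rw [mul_diagonal, diagonal_mul] at hθij
    have hU : U i j = 0 := by
      by_contra hU
      exact hθ (mul_left_cancel₀ hU (hθij.trans (mul_comm _ _)))
    simp [hU]

theorem conj_eq_self_of_commute [Fintype n] [DecidableEq n] {U : Matrix n n ℂ}
    (hU : U ∈ unitaryGroup n ℂ) {A : Matrix n n ℂ} (h : Commute U A) : U * A * Uᴴ = A := by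
  rw [h.eq, mul_assoc, ← star_eq_conjTranspose, mem_unitaryGroup_iff.mp hU, mul_one]

end Matrix

theorem trace_σ1_mul (a b : Fin 4) : trace (σ1 a * σ1 b) = if a = b then 2 else 0 := by
  fin_cases a <;> fin_cases b <;> simp [σ1, trace, Fin.sum_univ_two, one_add_one_eq_two]

theorem pauli_eq_piKron {N : ℕ} (a : Fin N → Fin 4) : pauli a = piKron fun k => σ1 (a k) := rfl

theorem trace_pauli_mul {N : ℕ} (a b : Fin N → Fin 4) :
    trace (pauli a * pauli b) = if a = b then 2 ^ N else 0 := by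
  simp only [pauli_eq_piKron, piKron_mul, trace_piKron, Pi.mul_apply, trace_σ1_mul]
  split_ifs with hab
  · simp [hab]
  · obtain ⟨k, hk⟩ := Function.ne_iff.mp hab
    exact Finset.prod_eq_zero (Finset.mem_univ k) (if_neg hk)

theorem trace_pauli_mul_sum_smul {N : ℕ} {ι : Type*} (s : Finset ι) (b : Fin N → Fin 4)
    (c : ι → ℂ) (a : ι → Fin N → Fin 4) :
    trace (pauli b * ∑ j ∈ s, c j • pauli (a j)) = 2 ^ N * ∑ j ∈ s with a j = b, c j := by
  classical
  simp only [Finset.mul_sum, mul_smul_comm, trace_sum, trace_smul, trace_pauli_mul, smul_eq_mul,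
    Finset.sum_filter, mul_ite, mul_zero, eq_comm (a := b)]
  exact Finset.sum_congr rfl fun j _ => by split_ifs <;> ring

def zIdx {N : ℕ} (j : Fin N) : Fin N → Fin 4 := fun k => if k = j then 3 else 0

theorem zIdx_injective {N : ℕ} : Function.Injective (zIdx (N := N)) := by
  intro j j' h
  by_contra hne
  simpa [zIdx, hne] using congrFun h j

def zWeight {N : ℕ} (i : QubitIdx N) : ℝ := ∑ k, (-1) ^ (i k : ℕ)

theorem pauli_zIdx {N : ℕ} (j : Fin N) :
    pauli (zIdx j) = diagonal fun i : QubitIdx N => (-1) ^ (i j : ℕ) := by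
  have hσ : ∀ k,
      σ1 (zIdx j k) = diagonal fun x : Fin 2 => if k = j then (-1) ^ (x : ℕ) else 1 := by
    intro k
    ext x y
    by_cases hk : k = j <;> fin_cases x <;> fin_cases y <;> simp [zIdx, hk, σ1]
  rw [pauli_eq_piKron, funext hσ, piKron_diagonal]
  simp

theorem sum_pauli_zIdx {N : ℕ} :
    ∑ j, pauli (zIdx j) = diagonal fun i : QubitIdx N => (zWeight i : ℂ) := by
  have hsum := map_sum (diagonalAddMonoidHom (QubitIdx N) ℂ)
    (fun j i => (-1 : ℂ) ^ (i j : ℕ)) Finset.univ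
  simp only [diagonalAddMonoidHom_apply] at hsum
  simp only [pauli_zIdx, ← hsum, zWeight]
  congr 1
  ext i
  push_cast
  simp [Finset.sum_apply]

theorem kronPow_expZ {N : ℕ} (θ : ℝ) :
    kronPow (expZ θ) = diagonal fun i : QubitIdx N => exp (zWeight i * θ * I) := by
  have hexpZ : expZ θ = diagonal fun x : Fin 2 => exp (((-1) ^ (x : ℕ) : ℝ) * θ * I) := by
    ext x y
    fin_cases x <;> fin_cases y <;> simp [expZ]
  change piKron (fun _ => expZ θ) = _
  simp only [hexpZ, piKron_diagonal, zWeight, ← exp_sum, ← Finset.sum_mul]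
  push_cast
  rfl

theorem exists_eq_one_of_sum_eq_one {ι : Type*} {s : Finset ι} {c : ι → ℂ}
    (hc : ∀ j ∈ s, c j ∈ phases) (h : ∑ j ∈ s, c j = 1) : ∃ j ∈ s, c j = 1 := by
  by_contra! hne
  have hre : (∑ j ∈ s, c j).re ≤ 0 := by
    rw [re_sum]
    refine Finset.sum_nonpos fun j hj => ?_
    have hcj := hc j hj
    simp only [phases, Set.mem_insert_iff, Set.mem_singleton_iff] at hcj
    rcases hcj with h1 | h1 | h1 | h1
    · exact absurd h1 (hne j hj)
    all_goals simp [h1]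
  norm_num [h] at hre

theorem commute_sum_pauli_zIdx {N : ℕ} {U : Op N}
    (hcomm : ∀ θ : ℝ, U * kronPow (expZ θ) = kronPow (expZ θ) * U) :
    Commute U (∑ j, pauli (zIdx j)) := by
  rw [sum_pauli_zIdx]
  refine Matrix.commute_diagonal_of_forall_commute_diagonal_exp zWeight fun θ => ?_
  rw [← kronPow_expZ]
  exact hcomm θ

/-- a Clifford unitary commuting with `(e^{iθZ})^⊗N` for all `θ`
permutes the single-qubit Pauli-Z operators: `U Zⱼ U† = Z_{σ(j)}`. -/
theorem stmt16 {N : ℕ} (U : Op N) (hU : IsClifford U)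
    (hcomm : ∀ θ : ℝ, U * kronPow (expZ θ) = kronPow (expZ θ) * U) :
    ∃ σ : Equiv.Perm (Fin N), ∀ j : Fin N,
      U * pauli (fun k => if k = j then 3 else 0) * Uᴴ =
        pauli (fun k => if k = σ j then 3 else 0) := by
  classical
  obtain ⟨hUnitary, hCl⟩ := hU
  choose c hc a ha using fun j : Fin N =>
    hCl (pauli (zIdx j)) ⟨1, by simp [phases], zIdx j, (one_smul ℂ _).symm⟩
  have hconj : ∑ j, c j • pauli (a j) = ∑ k, (1 : ℂ) • pauli (zIdx k) := by
    simp only [← ha, one_smul, ← Finset.mul_sum, ← Finset.sum_mul]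
    exact Matrix.conj_eq_self_of_commute hUnitary (commute_sum_pauli_zIdx hcomm)
  have hpreimage : ∀ k, ∃ j, a j = zIdx k ∧ c j = 1 := by
    intro k
    have hcoeff := congrArg (fun M => trace (pauli (zIdx k) * M)) hconj
    simp only [trace_pauli_mul_sum_smul, zIdx_injective.eq_iff, Finset.filter_eq',
      Finset.mem_univ, if_true, Finset.sum_singleton] at hcoeff
    have hsum : ∑ j with a j = zIdx k, c j = 1 :=
      mul_left_cancel₀ (pow_ne_zero N two_ne_zero) hcoeff
    obtain ⟨j, hj, hcj⟩ := exists_eq_one_of_sum_eq_one (fun j _ => hc j) hsum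
    exact ⟨j, (Finset.mem_filter.mp hj).2, hcj⟩
  choose f hfa hfc using hpreimage
  have hf : Function.Injective f := fun k k' h => zIdx_injective (by rw [← hfa, h, hfa])
  refine ⟨(Equiv.ofBijective f hf.bijective_of_finite).symm, fun j => ?_⟩
  obtain ⟨k, rfl⟩ := hf.bijective_of_finite.surjective j
  change U * pauli (zIdx (f k)) * Uᴴ = pauli (zIdx _)
  rw [Equiv.ofBijective_symm_apply_apply, ha, hfa, hfc, one_smul]
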